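/- Let A be a commutative ring, I a proper ideal, and f ∈ A. Then f is integral over I if and only if there exists a finitely generated A-module M such that (i) fM ⊆ IM, and (ii) whenever aM = 0 for some a ∈ A, there exists k ≥ 0 with a·f^k = 0. -/

import Mathlib

/-!
If `f` is integral over `I`, the coefficients of an equation of integral dependence already lie
in the powers of a finitely generated `J ≤ I`, and that equation makes `J` a reduction of
`K = J + (f)`: `K ^ (n + 1) = J * K ^ n`. The ideal `M = K ^ n` then works:
`f M ⊆ K ^ (n + 1) ⊆ I M`, and `f ^ n ∈ M`, so whatever kills `M` kills `f ^ n`.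
Conversely, the Cayley–Hamilton theorem applied to multiplication by `f` on `M` gives a monic
`p` with `p(f) M = 0` and the `i`-th coefficient from the top in `I ^ i`; then `p * X ^ k` is
an equation of integral dependence.
-/
/-- `f` is integral over the ideal `I`: there is an equation
`f^k + a₁ f^(k-1) + ⋯ + a_k = 0` with `aᵢ ∈ Iⁱ` (and `k ≥ 1`). -/
def IsIntegralOverIdeal {A : Type*} [CommRing A] (I : Ideal A) (f : A) : Prop :=
  ∃ (k : ℕ) (a : ℕ → A), 0 < k ∧ (∀ i ∈ Finset.Icc 1 k, a i ∈ I ^ i) ∧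
    f ^ k + ∑ i ∈ Finset.Icc 1 k, a i * f ^ (k - i) = 0

universe u

open Polynomial

namespace Ideal

variable {A : Type*} [CommSemiring A]

theorem exists_fg_le_mem_pow {I : Ideal A} {i : ℕ} {x : A} (hx : x ∈ I ^ i) :
    ∃ J : Ideal A, J.FG ∧ J ≤ I ∧ x ∈ J ^ i := by
  induction i generalizing x with
  | zero => exact ⟨⊥, Submodule.fg_bot, bot_le, by simp⟩
  | succ i ih =>
    rw [pow_succ] at hx
    refine Submodule.mul_induction_on hx (fun y hy z hz => ?_) ?_
    · obtain ⟨J, hJ, hJI, hyJ⟩ := ih hy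
      refine ⟨J ⊔ span {z}, Submodule.FG.sup hJ (Submodule.fg_span_singleton z),
        sup_le hJI ((span_singleton_le_iff_mem _).mpr hz), ?_⟩
      rw [pow_succ]
      exact mul_mem_mul (pow_right_mono le_sup_left i hyJ)
        (mem_sup_right (mem_span_singleton_self z))
    · rintro y z ⟨J₁, h₁, hJ₁I, hy⟩ ⟨J₂, h₂, hJ₂I, hz⟩
      exact ⟨J₁ ⊔ J₂, Submodule.FG.sup h₁ h₂, sup_le hJ₁I hJ₂I,
        add_mem (pow_right_mono le_sup_left _ hy) (pow_right_mono le_sup_right _ hz)⟩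

theorem pow_succ_mul_pow_le_mul_sup_pow (J F : Ideal A) {i j n : ℕ} (h : i + j = n) :
    J ^ (i + 1) * F ^ j ≤ J * (J ⊔ F) ^ n := by
  rw [← h, pow_succ', mul_assoc, pow_add]
  exact mul_mono_right (mul_mono (pow_right_mono le_sup_left i) (pow_right_mono le_sup_right j))

theorem sup_pow_succ_le_mul_sup_pow {J F : Ideal A} {n : ℕ}
    (hF : F ^ (n + 1) ≤ J * (J ⊔ F) ^ n) : (J ⊔ F) ^ (n + 1) ≤ J * (J ⊔ F) ^ n := by
  conv_lhs => rw [← add_eq_sup, add_pow, sum_eq_sup]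
  refine Finset.sup_le fun i hi => mul_le_left.trans ?_
  rcases i with _ | i
  · simpa using hF
  · exact pow_succ_mul_pow_le_mul_sup_pow J F (by simp at hi; omega)

end Ideal

section

variable {A : Type u} [CommRing A] {I : Ideal A} {f : A}

theorem IsIntegralOverIdeal.exists_fg_le (h : IsIntegralOverIdeal I f) :
    ∃ J : Ideal A, J.FG ∧ J ≤ I ∧ IsIntegralOverIdeal J f := by
  obtain ⟨k, a, hk, ha, heq⟩ := h
  have : ∀ i, ∃ J : Ideal A, J.FG ∧ J ≤ I ∧ (i ∈ Finset.Icc 1 k → a i ∈ J ^ i) := fun i => by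
    by_cases hi : i ∈ Finset.Icc 1 k
    · obtain ⟨J, hJ, hJI, hiJ⟩ := Ideal.exists_fg_le_mem_pow (ha i hi)
      exact ⟨J, hJ, hJI, fun _ => hiJ⟩
    · exact ⟨⊥, Submodule.fg_bot, bot_le, (absurd · hi)⟩
  choose J hJ hJI haJ using this
  exact ⟨(Finset.Icc 1 k).sup J, Submodule.fg_finset_sup _ _ fun i _ => hJ i,
    Finset.sup_le fun i _ => hJI i,
    k, a, hk, fun i hi => Ideal.pow_right_mono (Finset.le_sup hi) i (haJ i hi), heq⟩

theorem IsIntegralOverIdeal.sup_span_pow_succ_le (h : IsIntegralOverIdeal I f) :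
    ∃ n, (I ⊔ Ideal.span {f}) ^ (n + 1) ≤ I * (I ⊔ Ideal.span {f}) ^ n := by
  obtain ⟨_ | n, a, hk, ha, heq⟩ := h
  · omega
  refine ⟨n, Ideal.sup_pow_succ_le_mul_sup_pow ?_⟩
  rw [Ideal.span_singleton_pow, Ideal.span_singleton_le_iff_mem, eq_neg_of_add_eq_zero_left heq]
  refine neg_mem (Submodule.sum_mem _ fun i hi => ?_)
  obtain ⟨i, rfl⟩ : ∃ j, i = j + 1 := ⟨i - 1, by simp at hi; omega⟩
  refine Ideal.pow_succ_mul_pow_le_mul_sup_pow I _ (by simp at hi; omega)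
    (Ideal.mul_mem_mul (ha _ hi) (Ideal.pow_mem_pow (Ideal.mem_span_singleton_self f) _))

theorem IsIntegralOverIdeal.exists_module (h : IsIntegralOverIdeal I f) :
    ∃ (M : Type u) (_ : AddCommGroup M) (_ : Module A M),
      Module.Finite A M ∧
      (∀ m : M, f • m ∈ I • (⊤ : Submodule A M)) ∧
      (∀ a : A, (∀ m : M, a • m = 0) → ∃ k : ℕ, a * f ^ k = 0) := by
  obtain ⟨J, hJ, hJI, hJf⟩ := h.exists_fg_le
  obtain ⟨n, hn⟩ := hJf.sup_span_pow_succ_le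
  have hfK : f ∈ J ⊔ Ideal.span {f} := Ideal.mem_sup_right (Ideal.mem_span_singleton_self f)
  refine ⟨↥((J ⊔ Ideal.span {f}) ^ n), inferInstance, inferInstance,
    Module.Finite.iff_fg.mpr ((Submodule.FG.sup hJ (Submodule.fg_span_singleton f)).pow n),
    fun m => ?_, fun a ha => ⟨n, ?_⟩⟩
  · rw [Submodule.mem_smul_top_iff]
    have hfm : f * m ∈ (J ⊔ Ideal.span {f}) ^ (n + 1) :=
      pow_succ' (J ⊔ Ideal.span {f}) n ▸ Ideal.mul_mem_mul hfK m.2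
    exact Ideal.mul_mono_left hJI (hn hfm)
  · simpa using congrArg Subtype.val (ha ⟨f ^ n, Ideal.pow_mem_pow hfK n⟩)

theorem Polynomial.Monic.coeff_mul_X_pow_mem_pow {p : A[X]} (hp : p.Monic)
    (hpI : ∀ i, p.coeff i ∈ I ^ (p.natDegree - i)) (k : ℕ) :
    ∀ i, (p * X ^ k).coeff i ∈ I ^ ((p * X ^ k).natDegree - i) := by
  nontriviality A
  intro i
  rw [coeff_mul_X_pow', natDegree_mul_X_pow k hp.ne_zero]
  split_ifs with h
  · convert hpI (i - k) using 2
    omega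
  · exact zero_mem _

theorem isIntegralOverIdeal_of_monic {p : A[X]} (hp : p.Monic)
    (hpI : ∀ i, p.coeff i ∈ I ^ (p.natDegree - i)) (hpf : p.eval f = 0) :
    IsIntegralOverIdeal I f := by
  obtain h0 | hpos := Nat.eq_zero_or_pos p.natDegree
  · have : Subsingleton A := by
      rw [hp.natDegree_eq_zero] at h0
      simpa [h0, subsingleton_iff_zero_eq_one, eq_comm] using hpf
    exact ⟨1, 0, one_pos, fun _ _ => zero_mem _, Subsingleton.elim _ _⟩
  refine ⟨p.natDegree, fun i => p.coeff (p.natDegree - i), hpos, fun i hi => ?_, ?_⟩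
  · simpa [Nat.sub_sub_self (Finset.mem_Icc.mp hi).2] using hpI (p.natDegree - i)
  · have hreflect := Finset.sum_Ico_reflect (fun j => p.coeff j * f ^ j) 1
      (le_refl (p.natDegree + 1))
    simp only [Finset.Ico_add_one_right_eq_Icc, add_tsub_cancel_right, tsub_self] at hreflect
    rw [hreflect, ← hpf, eval_eq_sum_range, Finset.sum_range_succ, hp.coeff_natDegree, one_mul,
      add_comm, Finset.range_eq_Ico]

theorem isIntegralOverIdeal_of_module {M : Type*} [AddCommGroup M] [Module A M]
    [Module.Finite A M] (hfM : ∀ m : M, f • m ∈ I • (⊤ : Submodule A M))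
    (hann : ∀ a : A, (∀ m : M, a • m = 0) → ∃ k : ℕ, a * f ^ k = 0) :
    IsIntegralOverIdeal I f := by
  obtain ⟨p, hp, -, hpI, hpf⟩ :=
    LinearMap.exists_monic_and_natDegree_eq_and_coeff_mem_pow_and_aeval_eq_zero A
      (algebraMap A (Module.End A M) f) I (by rintro _ ⟨m, rfl⟩; exact hfM m)
  rw [aeval_algebraMap_apply_eq_algebraMap_eval] at hpf
  obtain ⟨k, hk⟩ := hann _ fun m => by simpa using LinearMap.congr_fun hpf m
  exact isIntegralOverIdeal_of_monic (hp.mul (monic_X_pow k))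
    (hp.coeff_mul_X_pow_mem_pow hpI k) (by simpa using hk)

end

theorem isIntegralOverIdeal_iff_exists_module_general {A : Type u} [CommRing A]
    (I : Ideal A) (f : A) :
    IsIntegralOverIdeal I f ↔
      ∃ (M : Type u) (_ : AddCommGroup M) (_ : Module A M),
        Module.Finite A M ∧
        (∀ m : M, f • m ∈ I • (⊤ : Submodule A M)) ∧
        (∀ a : A, (∀ m : M, a • m = 0) → ∃ k : ℕ, a * f ^ k = 0) := by
  refine ⟨IsIntegralOverIdeal.exists_module, ?_⟩
  rintro ⟨M, _, _, _, hfM, hann⟩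
  exact isIntegralOverIdeal_of_module hfM hann

/-- `f` is integral over `I` iff there is a finitely generated
`A`-module `M` with `f·M ⊆ I·M` such that any `a` annihilating `M` satisfies
`a·fᵏ = 0` for some `k`. -/
theorem isIntegralOverIdeal_iff_exists_module {A : Type u} [CommRing A]
    (I : Ideal A) (hI : I ≠ ⊤) (f : A) :
    IsIntegralOverIdeal I f ↔
      ∃ (M : Type u) (_ : AddCommGroup M) (_ : Module A M),
        Module.Finite A M ∧
        (∀ m : M, f • m ∈ I • (⊤ : Submodule A M)) ∧
        (∀ a : A, (∀ m : M, a • m = 0) → ∃ k : ℕ, a * f ^ k = 0) :=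
  isIntegralOverIdeal_iff_exists_module_general I f
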